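/- Let g : ℝ → ℝ be continuous, non-decreasing and everywhere positive, and let C > 0, q ≥ 0, θ > 0 and τ be constants with θq < τ < θq + 1. Suppose for some a ∈ ℝ there exists v : [0,∞) → ℝ solving the Cauchy problem (★) on all of [0,∞) with v(0) = a, with right derivative v'(0) = 0 at the origin, and with v'(r) > 0 and v''(r) > 0 for all r > 0. Then the Keller–Osserman condition holds: ∫_b^∞ (∫_0^t g(s) ds)^{-1/(θ+1)} dt = +∞ for every b > 0. -/

import Mathlib

/-!
Write `F(r) = ∫₀^r s^{τ-1} g(v s) ds` and `G(t) = ∫₀^t g`, so that `v' = C r^{-q} F^{1/θ} > 0`.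
Since `g ∘ v` is non-decreasing, `g(a) r^τ/τ ≤ F(r) ≤ g(v r) r^τ/τ`. The lower bound forces
`v → ∞`. The upper bound shows that `Z(r) = F^{(θ+1)/θ} r^{1-q-τ}` satisfies `Z' ≥ κ (G ∘ v)'`
for some `κ > 0` (this is where `θq < τ` enters), so eventually `F^{(θ+1)/θ} ≥ (κ/2) G(v) r^{q+τ-1}`,
i.e. `v' G(v)^{-1/(θ+1)} ≥ c r^{β-1}` with `β = (τ - θq + θ)/(θ+1) > 0`. Integrating,
`∫_b^{v R} G^{-1/(θ+1)} → ∞` as `R → ∞`, which is the Keller–Osserman condition.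
-/

open Real MeasureTheory Set Filter Topology ENNReal

/-- The right-hand side of the Cauchy problem (★):
`C · r^{-q} · (∫_0^r s^{τ-1} g(v(s)) ds)^{1/θ}`. -/
noncomputable def cauchyRHS (C q τ θ : ℝ) (g v : ℝ → ℝ) (r : ℝ) : ℝ :=
  C * r ^ (-q) * (∫ s in (0:ℝ)..r, s ^ (τ - 1) * g (v s)) ^ (1 / θ)

/-- `v : ℝ → ℝ` solves the Cauchy problem (★) on `[0, R)` (with `R ∈ (0, ∞]` an
extended nonnegative real): `v` is continuous on `[0, R)`, `v 0 = a`, and at every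
`r ∈ (0, R)` the derivative of `v` exists and is given by `cauchyRHS`. -/
def SolvesCauchy (C q τ θ a : ℝ) (g : ℝ → ℝ) (R : ℝ≥0∞) (v : ℝ → ℝ) : Prop :=
  ContinuousOn v {r : ℝ | 0 ≤ r ∧ ENNReal.ofReal r < R} ∧
  v 0 = a ∧
  ∀ r : ℝ, 0 < r → ENNReal.ofReal r < R → HasDerivAt v (cauchyRHS C q τ θ g v r) r

/-- The Keller–Osserman condition:
`∫_b^∞ (∫_0^t g(s) ds)^{-1/(θ+1)} dt = +∞` for every `b > 0`. -/
def KellerOsserman (θ : ℝ) (g : ℝ → ℝ) : Prop :=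
  ∀ b : ℝ, 0 < b →
    ∫⁻ t in Set.Ioi b, ENNReal.ofReal ((∫ s in (0:ℝ)..t, g s) ^ (-(1 / (θ + 1)))) = ⊤

noncomputable def weightedIntegral (τ : ℝ) (h : ℝ → ℝ) (r : ℝ) : ℝ :=
  ∫ s in (0:ℝ)..r, s ^ (τ - 1) * h s

lemma solvesCauchy_top_iff {C q τ θ a : ℝ} {g v : ℝ → ℝ} :
    SolvesCauchy C q τ θ a g ⊤ v ↔ ContinuousOn v (Ici 0) ∧ v 0 = a ∧
      ∀ r > 0, HasDerivAt v (C * r ^ (-q) * weightedIntegral τ (g ∘ v) r ^ (1 / θ)) r := by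
  simp [SolvesCauchy, cauchyRHS, weightedIntegral, Ici_def]

section weightedIntegral

variable {τ : ℝ} {h : ℝ → ℝ} {r : ℝ}

lemma intervalIntegrable_rpow_sub_one_mul (hτ : 0 < τ) (hh : ContinuousOn h (Ici 0))
    (hr : 0 ≤ r) : IntervalIntegrable (fun s => s ^ (τ - 1) * h s) volume 0 r :=
  (intervalIntegral.intervalIntegrable_rpow' (by linarith)).mul_continuousOn
    (hh.mono (by simp [uIcc_of_le hr, Icc_subset_Ici_self]))

lemma hasDerivAt_weightedIntegral (hτ : 0 < τ) (hh : ContinuousOn h (Ici 0)) (hr : 0 < r) :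
    HasDerivAt (weightedIntegral τ h) (r ^ (τ - 1) * h r) r := by
  have hcont : ContinuousOn (fun s => s ^ (τ - 1) * h s) (Ioi 0) :=
    (continuousOn_id.rpow_const fun s hs => Or.inl (ne_of_gt hs)).mul
      (hh.mono Ioi_subset_Ici_self)
  exact intervalIntegral.integral_hasDerivAt_right (intervalIntegrable_rpow_sub_one_mul hτ hh hr.le)
    (hcont.stronglyMeasurableAtFilter isOpen_Ioi r hr) (hcont.continuousAt (Ioi_mem_nhds hr))

lemma weightedIntegral_pos (hτ : 0 < τ) (hh : ContinuousOn h (Ici 0))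
    (hpos : ∀ s > 0, 0 < h s) (hr : 0 < r) : 0 < weightedIntegral τ h r :=
  intervalIntegral.intervalIntegral_pos_of_pos_on (intervalIntegrable_rpow_sub_one_mul hτ hh hr.le)
    (fun s hs => mul_pos (rpow_pos_of_pos hs.1 _) (hpos s hs.1)) hr

lemma weightedIntegral_const (hτ : 0 < τ) (c r : ℝ) :
    weightedIntegral τ (fun _ => c) r = c * r ^ τ / τ := by
  rw [weightedIntegral, intervalIntegral.integral_mul_const, integral_rpow (Or.inl (by linarith)),
    sub_add_cancel, zero_rpow hτ.ne', sub_zero]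
  ring

lemma weightedIntegral_mono {h₁ h₂ : ℝ → ℝ} (hτ : 0 < τ) (h₁c : ContinuousOn h₁ (Ici 0))
    (h₂c : ContinuousOn h₂ (Ici 0)) (hr : 0 ≤ r) (hle : ∀ s ∈ Icc 0 r, h₁ s ≤ h₂ s) :
    weightedIntegral τ h₁ r ≤ weightedIntegral τ h₂ r :=
  intervalIntegral.integral_mono_on hr (intervalIntegrable_rpow_sub_one_mul hτ h₁c hr)
    (intervalIntegrable_rpow_sub_one_mul hτ h₂c hr)
    (fun s hs => mul_le_mul_of_nonneg_left (hle s hs) (rpow_nonneg hs.1 _))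

lemma le_weightedIntegral_of_monotoneOn (hτ : 0 < τ) (hh : ContinuousOn h (Ici 0))
    (hmono : MonotoneOn h (Ici 0)) (hr : 0 ≤ r) : h 0 * r ^ τ / τ ≤ weightedIntegral τ h r := by
  rw [← weightedIntegral_const hτ]
  exact weightedIntegral_mono hτ continuousOn_const hh hr
    (fun s hs => hmono self_mem_Ici hs.1 hs.1)

lemma weightedIntegral_le_of_monotoneOn (hτ : 0 < τ) (hh : ContinuousOn h (Ici 0))
    (hmono : MonotoneOn h (Ici 0)) (hr : 0 ≤ r) : weightedIntegral τ h r ≤ h r * r ^ τ / τ := by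
  rw [← weightedIntegral_const hτ]
  exact weightedIntegral_mono hτ hh continuousOn_const hr
    (fun s hs => hmono hs.1 (mem_Ici.2 hr) hs.2)

end weightedIntegral

lemma sub_le_sub_of_hasDerivAt_le {f g f' g' : ℝ → ℝ} {a b : ℝ} (hab : a ≤ b)
    (hf : ∀ x ∈ Icc a b, HasDerivAt f (f' x) x) (hg : ∀ x ∈ Icc a b, HasDerivAt g (g' x) x)
    (hle : ∀ x ∈ Icc a b, g' x ≤ f' x) : g b - g a ≤ f b - f a := by
  have hmono : MonotoneOn (fun x => f x - g x) (Icc a b) :=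
    monotoneOn_of_hasDerivWithinAt_nonneg (convex_Icc a b)
      (fun x hx => ((hf x hx).sub (hg x hx)).continuousAt.continuousWithinAt)
      (fun x hx => ((hf x (interior_subset hx)).sub (hg x (interior_subset hx))).hasDerivWithinAt)
      (fun x hx => sub_nonneg.2 (hle x (interior_subset hx)))
  linarith [hmono (left_mem_Icc.2 hab) (right_mem_Icc.2 hab) hab]

lemma tendsto_atTop_of_hasDerivAt_ge_rpow {f f' : ℝ → ℝ} {x₀ c β : ℝ} (hx₀ : 0 < x₀)
    (hc : 0 < c) (hβ : 0 < β) (hf : ∀ x ≥ x₀, HasDerivAt f (f' x) x)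
    (hle : ∀ x ≥ x₀, c * x ^ (β - 1) ≤ f' x) : Tendsto f atTop atTop := by
  have hlower : ∀ x ≥ x₀, f x₀ + c / β * (x ^ β - x₀ ^ β) ≤ f x := by
    intro x hx
    have := sub_le_sub_of_hasDerivAt_le hx (fun y hy => hf y hy.1)
      (fun y hy => ((hasDerivAt_rpow_const (Or.inl (hx₀.trans_le hy.1).ne')).const_mul (c / β)))
      (fun y hy => by rw [← mul_assoc, div_mul_cancel₀ _ hβ.ne']; exact hle y hy.1)
    linarith
  refine tendsto_atTop_mono' atTop (eventually_ge_atTop x₀ |>.mono hlower) ?_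
  exact tendsto_atTop_add_const_left _ _ <| (tendsto_atTop_add_const_right _ _
    (tendsto_rpow_atTop hβ)).const_mul_atTop (div_pos hc hβ)

lemma intervalIntegral_le_toReal_setLIntegral_Ioi {f : ℝ → ℝ} {b y : ℝ} (hby : b ≤ y)
    (hf : ContinuousOn f (Ioi b)) (hnn : ∀ t ∈ Ioi b, 0 ≤ f t)
    (hI : ∫⁻ t in Ioi b, ENNReal.ofReal (f t) ≠ ⊤) :
    ∫ t in b..y, f t ≤ (∫⁻ t in Ioi b, ENNReal.ofReal (f t)).toReal := by
  rw [intervalIntegral.integral_of_le hby, integral_eq_lintegral_of_nonneg_ae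
    ((ae_restrict_mem measurableSet_Ioc).mono fun t ht => hnn t ht.1)
    ((hf.mono Ioc_subset_Ioi_self).aestronglyMeasurable measurableSet_Ioc)]
  exact ENNReal.toReal_mono hI (lintegral_mono_set Ioc_subset_Ioi_self)

section comparison

variable {C q θ τ : ℝ} {h : ℝ → ℝ}

lemma hasDerivAt_rpow_mul_rpow_of_hasDerivAt {F : ℝ → ℝ} {r : ℝ} (hθ : 0 < θ) (hr : 0 < r)
    (hF : HasDerivAt F (r ^ (τ - 1) * h r) r) (hFr : 0 < F r) :
    HasDerivAt (fun s => F s ^ ((θ + 1) / θ) * s ^ (1 - q - τ))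
      (F r ^ (1 / θ) * r ^ (-q) * ((θ + 1) / θ * h r - (q + τ - 1) * (F r * r ^ (-τ)))) r := by
  refine ((hF.rpow_const (Or.inl hFr.ne')).mul
    (hasDerivAt_rpow_const (Or.inl hr.ne'))).congr_deriv ?_
  have hexp : (θ + 1) / θ = 1 / θ + 1 := by field_simp; ring
  rw [hexp, add_sub_cancel_right, rpow_add hFr, Real.rpow_one,
    show τ - 1 = -q + -(1 - q - τ) by ring, show 1 - q - τ - 1 = -q + -τ by ring,
    rpow_add hr, rpow_add hr, rpow_neg hr.le (1 - q - τ)]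
  field_simp
  ring

lemma exists_mul_sub_le_weightedIntegral_rpow_mul_rpow {Φ : ℝ → ℝ} (hC : 0 < C) (hθ : 0 < θ)
    (hτ : 0 < τ) (hqτ : θ * q < τ) (hh : ContinuousOn h (Ici 0)) (hmono : MonotoneOn h (Ici 0))
    (hpos : ∀ s > 0, 0 < h s)
    (hΦ : ∀ r > 0, HasDerivAt Φ (h r * (C * r ^ (-q) * weightedIntegral τ h r ^ (1 / θ))) r) :
    ∃ κ > 0, ∀ R ≥ 1,
      κ * (Φ R - Φ 1) ≤ weightedIntegral τ h R ^ ((θ + 1) / θ) * R ^ (1 - q - τ) := by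
  set F := weightedIntegral τ h
  -- `F r ≤ h r * r ^ τ / τ` bounds the negative part `(q + τ - 1) F r^{-τ}` of `Z'` by
  -- `(q + τ - 1)⁺ h r / τ`, leaving this fraction of the positive part `(θ + 1) / θ * h r`.
  set κ := ((θ + 1) / θ - max (q + τ - 1) 0 / τ) / C
  have hκ : 0 < κ := by
    refine div_pos (sub_pos.2 ((div_lt_iff₀ hτ).2 ?_)) hC
    rw [div_mul_eq_mul_div, lt_div_iff₀ hθ]
    rcases max_cases (q + τ - 1) 0 with ⟨hm, -⟩ | ⟨hm, -⟩ <;> rw [hm] <;> nlinarith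
  have hF : ∀ r > 0, 0 < F r := fun r hr => weightedIntegral_pos hτ hh hpos hr
  have hderiv_le : ∀ r > 0, κ * (h r * (C * r ^ (-q) * F r ^ (1 / θ))) ≤
      F r ^ (1 / θ) * r ^ (-q) * ((θ + 1) / θ * h r - (q + τ - 1) * (F r * r ^ (-τ))) := by
    intro r hr
    have hX : F r * r ^ (-τ) ≤ h r / τ := by
      rw [rpow_neg hr.le, ← div_eq_mul_inv, div_le_div_iff₀ (rpow_pos_of_pos hr _) hτ]
      have := weightedIntegral_le_of_monotoneOn hτ hh hmono hr.le
      rw [le_div_iff₀ hτ] at this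
      linarith
    have hX0 : 0 ≤ F r * r ^ (-τ) := (mul_pos (hF r hr) (rpow_pos_of_pos hr _)).le
    have hbracket : κ * C * h r ≤ (θ + 1) / θ * h r - (q + τ - 1) * (F r * r ^ (-τ)) := by
      have : (q + τ - 1) * (F r * r ^ (-τ)) ≤ max (q + τ - 1) 0 * (h r / τ) :=
        (mul_le_mul_of_nonneg_right (le_max_left _ _) hX0).trans
          (mul_le_mul_of_nonneg_left hX (le_max_right _ _))
      rw [div_mul_cancel₀ _ hC.ne']
      linarith [show max (q + τ - 1) 0 / τ * h r = max (q + τ - 1) 0 * (h r / τ) by ring]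
    calc κ * (h r * (C * r ^ (-q) * F r ^ (1 / θ)))
        = F r ^ (1 / θ) * r ^ (-q) * (κ * C * h r) := by ring
      _ ≤ _ := mul_le_mul_of_nonneg_left hbracket
        (mul_pos (rpow_pos_of_pos (hF r hr) _) (rpow_pos_of_pos hr _)).le
  refine ⟨κ, hκ, fun R hR => ?_⟩
  have hcomp := sub_le_sub_of_hasDerivAt_le hR
    (fun r hr => hasDerivAt_rpow_mul_rpow_of_hasDerivAt (q := q) hθ (by linarith [hr.1])
      (hasDerivAt_weightedIntegral hτ hh (by linarith [hr.1])) (hF r (by linarith [hr.1])))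
    (fun r hr => (hΦ r (by linarith [hr.1])).const_mul κ)
    (fun r hr => hderiv_le r (by linarith [hr.1]))
  have hZ1 : 0 ≤ F 1 ^ ((θ + 1) / θ) * (1 : ℝ) ^ (1 - q - τ) := by
    simpa using rpow_nonneg (hF 1 one_pos).le _
  linarith

end comparison

lemma tendsto_atTop_of_hasDerivAt_weightedIntegral {C q θ τ : ℝ} {h v : ℝ → ℝ} (hC : 0 < C)
    (hθ : 0 < θ) (hτ : 0 < τ) (hqτ : θ * q < τ) (hh : ContinuousOn h (Ici 0))
    (hmono : MonotoneOn h (Ici 0)) (hh0 : 0 < h 0)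
    (hv : ∀ r > 0, HasDerivAt v (C * r ^ (-q) * weightedIntegral τ h r ^ (1 / θ)) r) :
    Tendsto v atTop atTop := by
  refine tendsto_atTop_of_hasDerivAt_ge_rpow (x₀ := 1) (β := τ / θ - q + 1) one_pos
    (by positivity : 0 < C * (h 0 / τ) ^ (1 / θ)) ?_ (fun r hr => hv r (by linarith)) ?_
  · have : q < τ / θ := by rw [lt_div_iff₀ hθ]; linarith
    linarith
  · intro r hr
    have hr0 : 0 < r := by linarith
    have hF : h 0 / τ * r ^ τ ≤ weightedIntegral τ h r := by
      rw [div_mul_eq_mul_div]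
      exact le_weightedIntegral_of_monotoneOn hτ hh hmono hr0.le
    have hF' := rpow_le_rpow (by positivity) hF (by positivity : 0 ≤ 1 / θ)
    rw [mul_rpow (by positivity) (by positivity), ← rpow_mul hr0.le, mul_one_div] at hF'
    calc C * (h 0 / τ) ^ (1 / θ) * r ^ (τ / θ - q + 1 - 1)
        = C * r ^ (-q) * ((h 0 / τ) ^ (1 / θ) * r ^ (τ / θ)) := by
          rw [show τ / θ - q + 1 - 1 = -q + τ / θ by ring, rpow_add hr0]; ring
      _ ≤ _ := mul_le_mul_of_nonneg_left hF' (by positivity)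

lemma tendsto_integral_atTop_of_le {g : ℝ → ℝ} {c : ℝ} (hg : Continuous g) (hc : 0 < c)
    (hgc : ∀ t ≥ 0, c ≤ g t) : Tendsto (fun t => ∫ s in (0:ℝ)..t, g s) atTop atTop := by
  refine tendsto_atTop_mono' atTop ((eventually_ge_atTop 0).mono fun t ht => ?_)
    (tendsto_id.const_mul_atTop hc)
  simpa [mul_comm] using intervalIntegral.integral_mono_on ht intervalIntegrable_const
    (hg.intervalIntegrable (μ := volume) 0 t) (fun s hs => hgc s hs.1)

lemma continuousOn_integral_rpow {g : ℝ → ℝ} (hg : Continuous g) (hpos : ∀ t, 0 < g t) (p : ℝ) :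
    ContinuousOn (fun t => (∫ s in (0:ℝ)..t, g s) ^ p) (Ioi 0) := fun t ht =>
  ((hg.integral_hasStrictDerivAt 0 t).hasDerivAt.continuousAt.rpow_const
    (Or.inl (intervalIntegral.intervalIntegral_pos_of_pos_on (hg.intervalIntegrable 0 t)
      (fun s _ => hpos s) ht).ne')).continuousWithinAt

lemma hasDerivAt_intervalIntegral_comp {ρ v : ℝ → ℝ} {a b R v' : ℝ}
    (hρ : ContinuousOn ρ (Ioi a)) (hb : a < b) (hvR : a < v R) (hv : HasDerivAt v v' R) :
    HasDerivAt (fun s => ∫ t in b..v s, ρ t) (ρ (v R) * v') R := by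
  have hint : IntervalIntegrable ρ volume b (v R) :=
    (hρ.mono (ordConnected_Ioi.uIcc_subset hb hvR)).intervalIntegrable
  exact (intervalIntegral.integral_hasDerivAt_right hint
    (hρ.stronglyMeasurableAtFilter isOpen_Ioi _ hvR)
    (hρ.continuousAt (Ioi_mem_nhds hvR))).comp R hv

lemma rpow_le_rpow_neg_mul_of_mul_le {C q θ τ k F R Φ : ℝ} (hθ : 0 < θ) (hC : 0 ≤ C)
    (hk : 0 ≤ k) (hF : 0 ≤ F) (hR : 0 < R) (hΦ : 0 < Φ)
    (hle : k * Φ ≤ F ^ ((θ + 1) / θ) * R ^ (1 - q - τ)) :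
    C * k ^ (1 / (θ + 1)) * R ^ (-q + (q + τ - 1) / (θ + 1) + 1 - 1) ≤
      Φ ^ (-(1 / (θ + 1))) * (C * R ^ (-q) * F ^ (1 / θ)) := by
  have hθ1 : 0 < θ + 1 := by linarith
  have h1 : k * Φ * R ^ (q + τ - 1) ≤ F ^ ((θ + 1) / θ) := by
    have := mul_le_mul_of_nonneg_right hle (rpow_nonneg hR.le (q + τ - 1))
    rwa [mul_assoc (F ^ _), ← rpow_add hR, show 1 - q - τ + (q + τ - 1) = 0 by ring,
      Real.rpow_zero, mul_one] at this
  have h2 := rpow_le_rpow (by positivity) h1 (by positivity : 0 ≤ 1 / (θ + 1))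
  rw [← rpow_mul hF, show (θ + 1) / θ * (1 / (θ + 1)) = 1 / θ by field_simp,
    mul_rpow (by positivity) (by positivity), mul_rpow hk hΦ.le, ← rpow_mul hR.le] at h2
  calc C * k ^ (1 / (θ + 1)) * R ^ (-q + (q + τ - 1) / (θ + 1) + 1 - 1)
      = Φ ^ (-(1 / (θ + 1))) * (C * R ^ (-q) *
          (k ^ (1 / (θ + 1)) * Φ ^ (1 / (θ + 1)) * R ^ ((q + τ - 1) * (1 / (θ + 1))))) := by
        rw [rpow_neg hΦ.le, show -q + (q + τ - 1) / (θ + 1) + 1 - 1 =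
          -q + (q + τ - 1) * (1 / (θ + 1)) by ring, rpow_add hR]
        field_simp [(rpow_pos_of_pos hΦ (1 / (θ + 1))).ne']
    _ ≤ _ := by gcongr

lemma tendsto_intervalIntegral_rpow_comp_atTop {g v : ℝ → ℝ} {C q θ τ b : ℝ}
    (hg_cont : Continuous g) (hg_mono : Monotone g) (hg_pos : ∀ t, 0 < g t)
    (hC : 0 < C) (hθ : 0 < θ) (hτ : 0 < τ) (hqτ : θ * q < τ) (hb : 0 < b)
    (hgv : ContinuousOn (g ∘ v) (Ici 0)) (hgv_mono : MonotoneOn (g ∘ v) (Ici 0))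
    (hv_top : Tendsto v atTop atTop)
    (hv : ∀ r > 0, HasDerivAt v (C * r ^ (-q) * weightedIntegral τ (g ∘ v) r ^ (1 / θ)) r) :
    Tendsto (fun R => ∫ t in b..v R, (∫ s in (0:ℝ)..t, g s) ^ (-(1 / (θ + 1)))) atTop atTop := by
  set G : ℝ → ℝ := fun t => ∫ s in (0:ℝ)..t, g s
  have hG : ∀ t, HasDerivAt G (g t) t := fun t =>
    (hg_cont.integral_hasStrictDerivAt 0 t).hasDerivAt
  have hGv : Tendsto (G ∘ v) atTop atTop :=
    (tendsto_integral_atTop_of_le hg_cont (hg_pos 0) fun t ht => hg_mono ht).comp hv_top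
  obtain ⟨κ, hκ, hZ⟩ := exists_mul_sub_le_weightedIntegral_rpow_mul_rpow (Φ := G ∘ v)
    hC hθ hτ hqτ hgv hgv_mono (fun s _ => hg_pos _) (fun r hr => (hG (v r)).comp r (hv r hr))
  obtain ⟨r₁, hr₁⟩ := eventually_atTop.1 ((eventually_ge_atTop 1).and
    ((hv_top.eventually_ge_atTop b).and (hGv.eventually_ge_atTop (2 * G (v 1)))))
  have hβ : 0 < -q + (q + τ - 1) / (θ + 1) + 1 := by
    rw [show -q + (q + τ - 1) / (θ + 1) + 1 = (τ - θ * q + θ) / (θ + 1) by field_simp; ring]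
    exact div_pos (by linarith) (by linarith)
  refine tendsto_atTop_of_hasDerivAt_ge_rpow (x₀ := max r₁ 1) (by positivity)
    (by positivity : 0 < C * (κ / 2) ^ (1 / (θ + 1))) hβ
    (fun R hR => hasDerivAt_intervalIntegral_comp (continuousOn_integral_rpow hg_cont hg_pos _)
      hb (hb.trans_le (hr₁ R (le_of_max_le_left hR)).2.1) (hv R (by linarith [le_max_right r₁ 1])))
    (fun R hR => ?_)
  obtain ⟨hR1, hbR, hGR⟩ := hr₁ R (le_of_max_le_left hR)
  have hGpos : 0 < G (v R) :=
    intervalIntegral.intervalIntegral_pos_of_pos (hg_cont.intervalIntegrable 0 _) hg_pos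
      (hb.trans_le hbR)
  refine rpow_le_rpow_neg_mul_of_mul_le hθ hC.le (by positivity)
    (weightedIntegral_pos hτ hgv (fun s _ => hg_pos _) (by linarith)).le (by linarith) hGpos ?_
  change 2 * G (v 1) ≤ G (v R) at hGR
  calc κ / 2 * G (v R) ≤ κ * (G (v R) - G (v 1)) := by nlinarith
    _ ≤ _ := hZ R hR1

theorem KO_of_entire_existence_small_tau_general
    (g : ℝ → ℝ) (hg_cont : Continuous g) (hg_mono : Monotone g) (hg_pos : ∀ t, 0 < g t)
    (C q θ τ : ℝ) (hC : 0 < C) (hq : 0 ≤ q) (hθ : 0 < θ)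
    (hτ1 : θ * q < τ)
    (a : ℝ) (v : ℝ → ℝ)
    (hv : SolvesCauchy C q τ θ a g ⊤ v) :
    KellerOsserman θ g := by
  obtain ⟨hv_cont, -, hv_deriv⟩ := solvesCauchy_top_iff.1 hv
  have hτ : 0 < τ := (mul_nonneg hθ.le hq).trans_lt hτ1
  have hgv : ContinuousOn (g ∘ v) (Ici 0) := hg_cont.comp_continuousOn hv_cont
  have hv_mono : StrictMonoOn v (Ici 0) :=
    strictMonoOn_of_hasDerivWithinAt_pos (convex_Ici 0) hv_cont
      (fun r hr => (hv_deriv r (by simpa using hr)).hasDerivWithinAt)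
      (fun r hr => by
        rw [interior_Ici] at hr
        exact mul_pos (mul_pos hC (rpow_pos_of_pos hr _))
          (rpow_pos_of_pos (weightedIntegral_pos hτ hgv (fun s _ => hg_pos _) hr) _))
  have hgv_mono : MonotoneOn (g ∘ v) (Ici 0) := hg_mono.comp_monotoneOn hv_mono.monotoneOn
  have hv_top : Tendsto v atTop atTop :=
    tendsto_atTop_of_hasDerivAt_weightedIntegral hC hθ hτ hτ1 hgv hgv_mono (hg_pos _) hv_deriv
  intro b hb
  have hdiv := tendsto_intervalIntegral_rpow_comp_atTop hg_cont hg_mono hg_pos hC hθ hτ hτ1 hb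
    hgv hgv_mono hv_top hv_deriv
  by_contra hI
  obtain ⟨R, hbR, hR⟩ :=
    ((hv_top.eventually_ge_atTop b).and (hdiv.eventually_gt_atTop _)).exists
  exact hR.not_ge (intervalIntegral_le_toReal_setLIntegral_Ioi hbR
    ((continuousOn_integral_rpow hg_cont hg_pos _).mono (Ioi_subset_Ioi hb.le))
    (fun t ht => rpow_nonneg (intervalIntegral.intervalIntegral_pos_of_pos
      (hg_cont.intervalIntegrable 0 t) hg_pos (hb.trans ht)).le _) hI)

/-- Part (b) of Theorem 1.3: if `θq < τ < θq + 1` and for some `a` the Cauchy problem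
(★) has an entire solution on `[0, ∞)` with right derivative `0` at the origin and
with `v' > 0` and `v'' > 0` on `(0, ∞)`, then the Keller–Osserman condition holds. -/
theorem KO_of_entire_existence_small_tau
    (g : ℝ → ℝ) (hg_cont : Continuous g) (hg_mono : Monotone g) (hg_pos : ∀ t, 0 < g t)
    (C q θ τ : ℝ) (hC : 0 < C) (hq : 0 ≤ q) (hθ : 0 < θ)
    (hτ1 : θ * q < τ) (hτ2 : τ < θ * q + 1)
    (a : ℝ) (v : ℝ → ℝ)
    (hv : SolvesCauchy C q τ θ a g ⊤ v)
    (hv0 : HasDerivWithinAt v 0 (Set.Ici 0) 0)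
    (hpos : ∀ r : ℝ, 0 < r →
      0 < deriv v r ∧ DifferentiableAt ℝ (deriv v) r ∧ 0 < deriv (deriv v) r) :
    KellerOsserman θ g :=
  KO_of_entire_existence_small_tau_general g hg_cont hg_mono hg_pos C q θ τ hC hq hθ hτ1 a v hv
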